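/- arXiv:2605.18520 — 2 statements merged into one kernel-verified Lean document; each statement's English description precedes it below -/
import Mathlib

section
/- Let I be an open real interval, α ∈ (1/2,1), K₁, K₂, c₁, c₂ ∈ ℝ, and let w : [0,1] × I → ℝ be C⁴. Suppose that for all (x,t) ∈ [0,1] × I: w_tt + w_xxxx − w_xxtt = 0, and for all t ∈ I: w(0,t) = w_x(0,t) = 0, w_xx(1,t) = −K₁ c₁, and w_xtt(1,t) − w_xxx(1,t) = −K₂ c₂. Define ϱ(t) = ∫₀¹ ( w_t(x w_x − α w) + w_xt[(1−α)w_x + x w_xx] ) dx. Then for all t ∈ I: ϱ'(t) = ½ w_t(1,t)² − (½+α)∫₀¹ w_t² dx − (α−½)∫₀¹ w_xt² dx + ½ w_xt(1,t)² − (3/2−α)∫₀¹ w_xx² dx − ½ w_xx(1,t)² − K₂ c₂ w_x(1,t) + K₂ α c₂ w(1,t) − K₁(1−α) c₁ w_x(1,t) + K₁² c₁². -/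
/-!
Differentiating under the integral sign (the integrand `Φ` of `ϱ` is `C¹` since `w` is `C⁴`)
gives `ϱ'(t) = ∫₀¹ ∂ₜΦ dx`. After substituting `w_tt = w_xxtt - w_xxxx`, the multiplier
computation behind the estimate is the pointwise identity `∂ₜΦ + q = ∂ₓH`
(`rhoDensity`, `rhoDissipation`, `rhoFlux` below), where
`q = (1/2 + α) w_t² + (α - 1/2) w_xt² + (3/2 - α) w_xx²` and
`H = x/2 (w_t² + w_xt² + w_xx²) + (w_xtt - w_xxx)(x w_x - α w) + (1 - α) w_xx w_x`.
Hence `ϱ'(t) = H(1,t) - H(0,t) - ∫₀¹ q dx`; the clamped end gives `H(0,t) = 0`, and the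
conditions at `x = 1` turn `H(1,t)` into the boundary terms of the formula.
-/

open Real Set

/-- `w_t`: partial derivative of `w` in time. -/
noncomputable def pt (w : ℝ → ℝ → ℝ) (x t : ℝ) : ℝ := deriv (fun s => w x s) t

/-- `w_x`: partial derivative of `w` in space. -/
noncomputable def px (w : ℝ → ℝ → ℝ) (x t : ℝ) : ℝ := deriv (fun y => w y t) x

/-- `w_tt`. -/
noncomputable def ptt (w : ℝ → ℝ → ℝ) (x t : ℝ) : ℝ := deriv (fun s => pt w x s) t

/-- `w_xt`: spatial derivative of `w_t`. -/
noncomputable def pxt (w : ℝ → ℝ → ℝ) (x t : ℝ) : ℝ := deriv (fun y => pt w y t) x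

/-- `w_xx`. -/
noncomputable def pxx (w : ℝ → ℝ → ℝ) (x t : ℝ) : ℝ := deriv (fun y => px w y t) x

/-- `w_xxx`. -/
noncomputable def pxxx (w : ℝ → ℝ → ℝ) (x t : ℝ) : ℝ := deriv (fun y => pxx w y t) x

/-- `w_xxxx`. -/
noncomputable def pxxxx (w : ℝ → ℝ → ℝ) (x t : ℝ) : ℝ := deriv (fun y => pxxx w y t) x

/-- `w_xtt`: time derivative of `w_xt`. -/
noncomputable def pxtt (w : ℝ → ℝ → ℝ) (x t : ℝ) : ℝ := deriv (fun s => pxt w x s) t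

/-- `w_xxtt`: second spatial derivative of `w_tt`. -/
noncomputable def pxxtt (w : ℝ → ℝ → ℝ) (x t : ℝ) : ℝ :=
  deriv (fun y => deriv (fun z => ptt w z t) y) x

/-- The energy E(t) = ½∫₀¹ w_t² + ½∫₀¹ w_xx² + ½∫₀¹ w_xt² dx. -/
noncomputable def energy (w : ℝ → ℝ → ℝ) (t : ℝ) : ℝ :=
  (1/2) * (∫ x in (0:ℝ)..1, (pt w x t) ^ 2)
    + (1/2) * (∫ x in (0:ℝ)..1, (pxx w x t) ^ 2)
    + (1/2) * (∫ x in (0:ℝ)..1, (pxt w x t) ^ 2)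

/-- The auxiliary functional ϱ(t) = ∫₀¹ ( w_t(x w_x − α w) + w_xt[(1−α)w_x + x w_xx] ) dx. -/
noncomputable def rhoFun (w : ℝ → ℝ → ℝ) (α : ℝ) (t : ℝ) : ℝ :=
  ∫ x in (0:ℝ)..1,
    (pt w x t * (x * px w x t - α * w x t)
      + pxt w x t * ((1 - α) * px w x t + x * pxx w x t))

open Function

section DirDeriv

variable {E F : Type*} [NormedAddCommGroup E] [NormedSpace ℝ E]
  [NormedAddCommGroup F] [NormedSpace ℝ F] {g : E → F}

noncomputable def dirDeriv (v : E) (g : E → F) (p : E) : F := fderiv ℝ g p v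

theorem ContDiff.contDiff_dirDeriv {m n : WithTop ℕ∞} (hg : ContDiff ℝ n g) (hmn : m + 1 ≤ n)
    (v : E) : ContDiff ℝ m (dirDeriv v g) :=
  (hg.fderiv_right hmn).clm_apply contDiff_const

theorem ContDiff.continuous_dirDeriv {n : WithTop ℕ∞} (hg : ContDiff ℝ n g) (hn : n ≠ 0)
    (v : E) : Continuous (dirDeriv v g) :=
  (hg.continuous_fderiv hn).clm_apply continuous_const

theorem ContDiff.differentiable_dirDeriv {n : WithTop ℕ∞} (hg : ContDiff ℝ n g) (hn : 2 ≤ n)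
    (v : E) : Differentiable ℝ (dirDeriv v g) :=
  (hg.contDiff_dirDeriv (m := 1) (by simpa [one_add_one_eq_two] using hn) v).differentiable
    one_ne_zero

theorem dirDeriv_comm (hg : ContDiff ℝ 2 g) (u v : E) :
    dirDeriv u (dirDeriv v g) = dirDeriv v (dirDeriv u g) := by
  have hd : Differentiable ℝ (fderiv ℝ g) :=
    (hg.fderiv_right (m := 1) le_rfl).differentiable one_ne_zero
  have second : ∀ a b p, dirDeriv a (dirDeriv b g) p = fderiv ℝ (fderiv ℝ g) p a b := by
    intro a b p
    change fderiv ℝ (fun y => fderiv ℝ g y b) p a = _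
    simp [fderiv_clm_apply (hd p) (differentiableAt_const b)]
  funext p
  rw [second, second, (hg.contDiffAt.isSymmSndFDerivAt (by simp)) u v]

end DirDeriv

notation "∂ₓ" => dirDeriv ((1 : ℝ), (0 : ℝ))
notation "∂ₜ" => dirDeriv ((0 : ℝ), (1 : ℝ))

section Slices

variable {F : Type*} [NormedAddCommGroup F] [NormedSpace ℝ F] {g : ℝ × ℝ → F}

theorem DifferentiableAt.hasDerivAt_fst_slice {x t : ℝ} (hg : DifferentiableAt ℝ g (x, t)) :
    HasDerivAt (fun y => g (y, t)) (∂ₓ g (x, t)) x :=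
  hg.hasFDerivAt.comp_hasDerivAt x ((hasDerivAt_id x).prodMk (hasDerivAt_const x t))

theorem DifferentiableAt.hasDerivAt_snd_slice {x t : ℝ} (hg : DifferentiableAt ℝ g (x, t)) :
    HasDerivAt (fun s => g (x, s)) (∂ₜ g (x, t)) t :=
  hg.hasFDerivAt.comp_hasDerivAt t ((hasDerivAt_const t x).prodMk (hasDerivAt_id t))

theorem deriv_fst_slice_of_eq {x t : ℝ} {h : ℝ → F} (hg : DifferentiableAt ℝ g (x, t))
    (hh : ∀ y, h y = g (y, t)) : deriv h x = ∂ₓ g (x, t) := by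
  rw [funext hh]
  exact hg.hasDerivAt_fst_slice.deriv

theorem deriv_snd_slice_of_eq {x t : ℝ} {h : ℝ → F} (hg : DifferentiableAt ℝ g (x, t))
    (hh : ∀ s, h s = g (x, s)) : deriv h t = ∂ₜ g (x, t) := by
  rw [funext hh]
  exact hg.hasDerivAt_snd_slice.deriv

theorem integral_dirDeriv_fst [CompleteSpace F] (hg : ContDiff ℝ 1 g) (a b t : ℝ) :
    ∫ x in a..b, ∂ₓ g (x, t) = g (b, t) - g (a, t) := by
  have := hg.continuous_dirDeriv one_ne_zero (1, 0)
  exact intervalIntegral.integral_eq_sub_of_hasDerivAt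
    (fun _ _ => (hg.differentiable one_ne_zero _).hasDerivAt_fst_slice)
    (Continuous.intervalIntegrable (by fun_prop) a b)

theorem hasDerivAt_intervalIntegral_of_contDiff (hg : ContDiff ℝ 1 g) (a b t₀ : ℝ) :
    HasDerivAt (fun t => ∫ x in a..b, g (x, t)) (∫ x in a..b, ∂ₜ g (x, t₀)) t₀ := by
  have hg' : Continuous (∂ₜ g) := hg.continuous_dirDeriv one_ne_zero _
  have slice : ∀ {G : ℝ × ℝ → F}, Continuous G → ∀ t, Continuous fun x => G (x, t) :=
    fun hG t => hG.comp (continuous_id.prodMk continuous_const)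
  obtain ⟨C, hC⟩ : ∃ C, ∀ p ∈ uIcc a b ×ˢ Metric.closedBall t₀ 1, ‖∂ₜ g p‖ ≤ C :=
    (isCompact_uIcc.prod (isCompact_closedBall t₀ 1)).exists_bound_of_continuousOn
      hg'.continuousOn
  refine (intervalIntegral.hasDerivAt_integral_of_dominated_loc_of_deriv_le
    (μ := MeasureTheory.volume) (F := fun t x => g (x, t)) (bound := fun _ => C)
    (Metric.ball_mem_nhds t₀ one_pos)
    (.of_forall fun t => (slice hg.continuous t).aestronglyMeasurable)
    ((slice hg.continuous t₀).intervalIntegrable a b) (slice hg' t₀).aestronglyMeasurable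
    (.of_forall fun x hx t ht =>
      hC (x, t) ⟨uIoc_subset_uIcc hx, Metric.ball_subset_closedBall ht⟩)
    intervalIntegrable_const
    (.of_forall fun _ _ _ _ => (hg.differentiable one_ne_zero _).hasDerivAt_snd_slice)).2

end Slices

section Multiplier

variable (α : ℝ) (g : ℝ × ℝ → ℝ)

noncomputable def rhoDensity (p : ℝ × ℝ) : ℝ :=
  ∂ₜ g p * (p.1 * ∂ₓ g p - α * g p) + ∂ₓ (∂ₜ g) p * ((1 - α) * ∂ₓ g p + p.1 * ∂ₓ (∂ₓ g) p)

noncomputable def rhoFlux (p : ℝ × ℝ) : ℝ :=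
  p.1 / 2 * (∂ₜ g p ^ 2 + ∂ₓ (∂ₜ g) p ^ 2 + ∂ₓ (∂ₓ g) p ^ 2)
    + (∂ₜ (∂ₓ (∂ₜ g)) p - ∂ₓ (∂ₓ (∂ₓ g)) p) * (p.1 * ∂ₓ g p - α * g p)
    + (1 - α) * ∂ₓ (∂ₓ g) p * ∂ₓ g p

noncomputable def rhoDissipation (p : ℝ × ℝ) : ℝ :=
  (1 / 2 + α) * ∂ₜ g p ^ 2 + (α - 1 / 2) * ∂ₓ (∂ₜ g) p ^ 2 + (3 / 2 - α) * ∂ₓ (∂ₓ g) p ^ 2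

variable {α g}

theorem contDiff_rhoDensity (hg : ContDiff ℝ 3 g) : ContDiff ℝ 1 (rhoDensity α g) := by
  have hg₁ : ∀ v, ContDiff ℝ 2 (dirDeriv v g) := fun v => hg.contDiff_dirDeriv (by norm_num) v
  have : ContDiff ℝ 1 g := hg.of_le (by norm_num)
  have : ContDiff ℝ 1 (∂ₜ g) := hg.contDiff_dirDeriv (by norm_num) _
  have : ContDiff ℝ 1 (∂ₓ g) := hg.contDiff_dirDeriv (by norm_num) _
  have : ContDiff ℝ 1 (∂ₓ (∂ₜ g)) := (hg₁ _).contDiff_dirDeriv (by norm_num) _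
  have : ContDiff ℝ 1 (∂ₓ (∂ₓ g)) := (hg₁ _).contDiff_dirDeriv (by norm_num) _
  unfold rhoDensity
  fun_prop

theorem contDiff_rhoFlux (hg : ContDiff ℝ 4 g) : ContDiff ℝ 1 (rhoFlux α g) := by
  have hg₁ : ∀ v, ContDiff ℝ 3 (dirDeriv v g) := fun v => hg.contDiff_dirDeriv (by norm_num) v
  have hg₂ : ∀ u v, ContDiff ℝ 2 (dirDeriv u (dirDeriv v g)) :=
    fun u v => (hg₁ v).contDiff_dirDeriv (by norm_num) u
  have : ContDiff ℝ 1 g := hg.of_le (by norm_num)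
  have : ContDiff ℝ 1 (∂ₜ g) := hg.contDiff_dirDeriv (by norm_num) _
  have : ContDiff ℝ 1 (∂ₓ g) := hg.contDiff_dirDeriv (by norm_num) _
  have : ContDiff ℝ 1 (∂ₓ (∂ₜ g)) := (hg₁ _).contDiff_dirDeriv (by norm_num) _
  have : ContDiff ℝ 1 (∂ₓ (∂ₓ g)) := (hg₁ _).contDiff_dirDeriv (by norm_num) _
  have : ContDiff ℝ 1 (∂ₜ (∂ₓ (∂ₜ g))) := (hg₂ _ _).contDiff_dirDeriv (by norm_num) _
  have : ContDiff ℝ 1 (∂ₓ (∂ₓ (∂ₓ g))) := (hg₂ _ _).contDiff_dirDeriv (by norm_num) _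
  unfold rhoFlux
  fun_prop

theorem continuous_rhoDissipation (hg : ContDiff ℝ 2 g) : Continuous (rhoDissipation α g) := by
  have : Continuous (∂ₜ g) := hg.continuous_dirDeriv two_ne_zero _
  have : Continuous (∂ₓ (∂ₜ g)) :=
    (hg.contDiff_dirDeriv (m := 1) (by norm_num) _).continuous_dirDeriv one_ne_zero _
  have : Continuous (∂ₓ (∂ₓ g)) :=
    (hg.contDiff_dirDeriv (m := 1) (by norm_num) _).continuous_dirDeriv one_ne_zero _
  unfold rhoDissipation
  fun_prop

theorem rhoDensity_balance (hg : ContDiff ℝ 4 g) {x t : ℝ}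
    (hpde : ∂ₜ (∂ₜ g) (x, t) + ∂ₓ (∂ₓ (∂ₓ (∂ₓ g))) (x, t) - ∂ₓ (∂ₓ (∂ₜ (∂ₜ g))) (x, t) = 0) :
    ∂ₜ (rhoDensity α g) (x, t) + rhoDissipation α g (x, t) = ∂ₓ (rhoFlux α g) (x, t) := by
  have hg₁ : ∀ v, ContDiff ℝ 3 (dirDeriv v g) := fun v => hg.contDiff_dirDeriv (by norm_num) v
  have hg₂ : ∀ u v, ContDiff ℝ 2 (dirDeriv u (dirDeriv v g)) :=
    fun u v => (hg₁ v).contDiff_dirDeriv (by norm_num) u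
  have d₀ : ∀ p, DifferentiableAt ℝ g p := hg.differentiable (by norm_num)
  have d₁ : ∀ v p, DifferentiableAt ℝ (dirDeriv v g) p :=
    fun v => hg.differentiable_dirDeriv (by norm_num) v
  have d₂ : ∀ u v p, DifferentiableAt ℝ (dirDeriv u (dirDeriv v g)) p :=
    fun u v => (hg₁ v).differentiable_dirDeriv (by norm_num) u
  have d₃ : ∀ u v z p, DifferentiableAt ℝ (dirDeriv u (dirDeriv v (dirDeriv z g))) p :=
    fun u v z => (hg₂ v z).differentiable_dirDeriv le_rfl u
  have hρ : HasDerivAt (fun s => rhoDensity α g (x, s)) _ t :=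
    ((d₁ _ _).hasDerivAt_snd_slice.mul (((d₁ _ _).hasDerivAt_snd_slice.const_mul x).sub
        ((d₀ _).hasDerivAt_snd_slice.const_mul α))).add
      ((d₂ _ _ _).hasDerivAt_snd_slice.mul (((d₁ _ _).hasDerivAt_snd_slice.const_mul (1 - α)).add
        ((d₂ _ _ _).hasDerivAt_snd_slice.const_mul x)))
  have hH : HasDerivAt (fun y => rhoFlux α g (y, t)) _ x :=
    (((hasDerivAt_id' x).div_const 2).mul ((((d₁ _ _).hasDerivAt_fst_slice.pow 2).add
        ((d₂ _ _ _).hasDerivAt_fst_slice.pow 2)).add ((d₂ _ _ _).hasDerivAt_fst_slice.pow 2))).add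
      (((d₃ _ _ _ _).hasDerivAt_fst_slice.sub (d₃ _ _ _ _).hasDerivAt_fst_slice).mul
        (((hasDerivAt_id' x).mul (d₁ _ _).hasDerivAt_fst_slice).sub
          ((d₀ _).hasDerivAt_fst_slice.const_mul α))) |>.add
      (((d₂ _ _ _).hasDerivAt_fst_slice.const_mul (1 - α)).mul (d₁ _ _).hasDerivAt_fst_slice)
  have swap₁ : ∂ₜ (∂ₓ g) = ∂ₓ (∂ₜ g) := dirDeriv_comm (hg.of_le (by norm_num)) _ _
  have swap₂ : ∂ₜ (∂ₓ (∂ₓ g)) = ∂ₓ (∂ₓ (∂ₜ g)) := by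
    rw [dirDeriv_comm ((hg₁ _).of_le (by norm_num)), swap₁]
  have swap₃ : ∂ₓ (∂ₜ (∂ₓ (∂ₜ g))) = ∂ₓ (∂ₓ (∂ₜ (∂ₜ g))) := by
    rw [dirDeriv_comm ((hg₁ (0, 1)).of_le (by norm_num)) (0, 1) (1, 0)]
  rw [((contDiff_rhoDensity (hg.of_le (by norm_num))).differentiable one_ne_zero
      _).hasDerivAt_snd_slice.unique hρ,
    ((contDiff_rhoFlux hg).differentiable one_ne_zero _).hasDerivAt_fst_slice.unique hH,
    swap₁, swap₂, swap₃]
  simp only [rhoDissipation, Pi.sub_apply, Pi.mul_apply, Pi.add_apply, Pi.pow_apply]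
  linear_combination (x * ∂ₓ g (x, t) - α * g (x, t)) * hpde

theorem hasDerivAt_integral_rhoDensity (hg : ContDiff ℝ 4 g) {a b t : ℝ}
    (hpde : ∀ x ∈ uIcc a b, ∂ₜ (∂ₜ g) (x, t) + ∂ₓ (∂ₓ (∂ₓ (∂ₓ g))) (x, t)
      - ∂ₓ (∂ₓ (∂ₜ (∂ₜ g))) (x, t) = 0) :
    HasDerivAt (fun s => ∫ x in a..b, rhoDensity α g (x, s))
      (rhoFlux α g (b, t) - rhoFlux α g (a, t) - ∫ x in a..b, rhoDissipation α g (x, t)) t := by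
  have := (contDiff_rhoFlux (α := α) hg).continuous_dirDeriv one_ne_zero (1, 0)
  have := continuous_rhoDissipation (α := α) (hg.of_le (by norm_num))
  refine (hasDerivAt_intervalIntegral_of_contDiff
    (contDiff_rhoDensity (hg.of_le (by norm_num))) a b t).congr_deriv ?_
  rw [← integral_dirDeriv_fst (contDiff_rhoFlux hg), ← intervalIntegral.integral_sub
    (Continuous.intervalIntegrable (by fun_prop) _ _)
    (Continuous.intervalIntegrable (by fun_prop) _ _)]
  exact intervalIntegral.integral_congr fun x hx =>
    eq_sub_of_add_eq (rhoDensity_balance hg (hpde x hx))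

theorem integral_rhoDissipation (hg : ContDiff ℝ 2 g) (a b t : ℝ) :
    ∫ x in a..b, rhoDissipation α g (x, t) =
      (1 / 2 + α) * (∫ x in a..b, ∂ₜ g (x, t) ^ 2)
        + (α - 1 / 2) * (∫ x in a..b, ∂ₓ (∂ₜ g) (x, t) ^ 2)
        + (3 / 2 - α) * (∫ x in a..b, ∂ₓ (∂ₓ g) (x, t) ^ 2) := by
  have : Continuous (∂ₜ g) := hg.continuous_dirDeriv two_ne_zero _
  have : Continuous (∂ₓ (∂ₜ g)) :=
    (hg.contDiff_dirDeriv (m := 1) (by norm_num) _).continuous_dirDeriv one_ne_zero _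
  have : Continuous (∂ₓ (∂ₓ g)) :=
    (hg.contDiff_dirDeriv (m := 1) (by norm_num) _).continuous_dirDeriv one_ne_zero _
  simp only [rhoDissipation]
  rw [intervalIntegral.integral_add (Continuous.intervalIntegrable (by fun_prop) _ _)
      (Continuous.intervalIntegrable (by fun_prop) _ _),
    intervalIntegral.integral_add (Continuous.intervalIntegrable (by fun_prop) _ _)
      (Continuous.intervalIntegrable (by fun_prop) _ _),
    intervalIntegral.integral_const_mul, intervalIntegral.integral_const_mul,
    intervalIntegral.integral_const_mul]

theorem rhoFlux_eq_zero_of_clamped {t : ℝ} (h₀ : g (0, t) = 0) (h₁ : ∂ₓ g (0, t) = 0) :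
    rhoFlux α g (0, t) = 0 := by
  simp [rhoFlux, h₀, h₁]

end Multiplier

section Partials

variable {w : ℝ → ℝ → ℝ}

theorem pt_eq (hw : Differentiable ℝ (uncurry w)) (x t : ℝ) :
    pt w x t = ∂ₜ (uncurry w) (x, t) :=
  deriv_snd_slice_of_eq (hw _) fun _ => rfl

theorem px_eq (hw : Differentiable ℝ (uncurry w)) (x t : ℝ) :
    px w x t = ∂ₓ (uncurry w) (x, t) :=
  deriv_fst_slice_of_eq (hw _) fun _ => rfl

theorem ptt_eq (hw : ContDiff ℝ 2 (uncurry w)) (x t : ℝ) :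
    ptt w x t = ∂ₜ (∂ₜ (uncurry w)) (x, t) :=
  deriv_snd_slice_of_eq (hw.differentiable_dirDeriv le_rfl _ _)
    fun s => pt_eq (hw.differentiable two_ne_zero) x s

theorem pxt_eq (hw : ContDiff ℝ 2 (uncurry w)) (x t : ℝ) :
    pxt w x t = ∂ₓ (∂ₜ (uncurry w)) (x, t) :=
  deriv_fst_slice_of_eq (hw.differentiable_dirDeriv le_rfl _ _)
    fun y => pt_eq (hw.differentiable two_ne_zero) y t

theorem pxx_eq (hw : ContDiff ℝ 2 (uncurry w)) (x t : ℝ) :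
    pxx w x t = ∂ₓ (∂ₓ (uncurry w)) (x, t) :=
  deriv_fst_slice_of_eq (hw.differentiable_dirDeriv le_rfl _ _)
    fun y => px_eq (hw.differentiable two_ne_zero) y t

theorem pxxx_eq (hw : ContDiff ℝ 3 (uncurry w)) (x t : ℝ) :
    pxxx w x t = ∂ₓ (∂ₓ (∂ₓ (uncurry w))) (x, t) :=
  deriv_fst_slice_of_eq
    ((hw.contDiff_dirDeriv (m := 2) (by norm_num) _).differentiable_dirDeriv le_rfl _ _)
    fun y => pxx_eq (hw.of_le (by norm_num)) y t

theorem pxtt_eq (hw : ContDiff ℝ 3 (uncurry w)) (x t : ℝ) :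
    pxtt w x t = ∂ₜ (∂ₓ (∂ₜ (uncurry w))) (x, t) :=
  deriv_snd_slice_of_eq
    ((hw.contDiff_dirDeriv (m := 2) (by norm_num) _).differentiable_dirDeriv le_rfl _ _)
    fun s => pxt_eq (hw.of_le (by norm_num)) x s

theorem pxxxx_eq (hw : ContDiff ℝ 4 (uncurry w)) (x t : ℝ) :
    pxxxx w x t = ∂ₓ (∂ₓ (∂ₓ (∂ₓ (uncurry w)))) (x, t) :=
  deriv_fst_slice_of_eq (((hw.contDiff_dirDeriv (m := 3) (by norm_num) _).contDiff_dirDeriv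
    (m := 2) (by norm_num) _).differentiable_dirDeriv le_rfl _ _)
    fun y => pxxx_eq (hw.of_le (by norm_num)) y t

theorem pxxtt_eq (hw : ContDiff ℝ 4 (uncurry w)) (x t : ℝ) :
    pxxtt w x t = ∂ₓ (∂ₓ (∂ₜ (∂ₜ (uncurry w)))) (x, t) := by
  have h₂ : ∀ u v, ContDiff ℝ 2 (dirDeriv u (dirDeriv v (uncurry w))) :=
    fun u v => (hw.contDiff_dirDeriv (m := 3) (by norm_num) v).contDiff_dirDeriv (by norm_num) u
  exact deriv_fst_slice_of_eq ((h₂ _ _).differentiable_dirDeriv le_rfl _ _) fun y =>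
    deriv_fst_slice_of_eq ((h₂ _ _).differentiable two_ne_zero _) fun z =>
      ptt_eq (hw.of_le (by norm_num)) z t

theorem rhoFun_eq_integral_rhoDensity (hw : ContDiff ℝ 2 (uncurry w)) (α : ℝ) :
    rhoFun w α = fun t => ∫ x in (0 : ℝ)..1, rhoDensity α (uncurry w) (x, t) := by
  have hw₁ := hw.differentiable two_ne_zero
  funext t
  simp only [rhoFun, rhoDensity, pt_eq hw₁, px_eq hw₁, pxt_eq hw, pxx_eq hw, uncurry_apply_pair]

end Partials

theorem stmt_6_general (a b α K₁ K₂ c₁ c₂ : ℝ) (w : ℝ → ℝ → ℝ)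
    (hw : ContDiff ℝ 4 (Function.uncurry w))
    (hpde : ∀ x ∈ Set.Icc (0:ℝ) 1, ∀ t ∈ Set.Ioo a b,
      ptt w x t + pxxxx w x t - pxxtt w x t = 0)
    (hbc0 : ∀ t ∈ Set.Ioo a b, w 0 t = 0 ∧ px w 0 t = 0)
    (hbc1 : ∀ t ∈ Set.Ioo a b, pxx w 1 t = -K₁ * c₁)
    (hbc2 : ∀ t ∈ Set.Ioo a b, pxtt w 1 t - pxxx w 1 t = -K₂ * c₂) :
    ∀ t ∈ Set.Ioo a b,
      HasDerivAt (rhoFun w α)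
        ((1/2) * (pt w 1 t) ^ 2 - (1/2 + α) * (∫ x in (0:ℝ)..1, (pt w x t) ^ 2)
          - (α - 1/2) * (∫ x in (0:ℝ)..1, (pxt w x t) ^ 2)
          + (1/2) * (pxt w 1 t) ^ 2
          - (3/2 - α) * (∫ x in (0:ℝ)..1, (pxx w x t) ^ 2)
          - (1/2) * (pxx w 1 t) ^ 2
          - K₂ * c₂ * px w 1 t + K₂ * α * c₂ * w 1 t
          - K₁ * (1 - α) * c₁ * px w 1 t + K₁ ^ 2 * c₁ ^ 2) t := by
  intro t ht
  have hw₁ : Differentiable ℝ (uncurry w) := hw.differentiable (by norm_num)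
  have hw₂ : ContDiff ℝ 2 (uncurry w) := hw.of_le (by norm_num)
  have hw₃ : ContDiff ℝ 3 (uncurry w) := hw.of_le (by norm_num)
  have hpde' : ∀ x ∈ uIcc (0 : ℝ) 1, ∂ₜ (∂ₜ (uncurry w)) (x, t)
      + ∂ₓ (∂ₓ (∂ₓ (∂ₓ (uncurry w)))) (x, t) - ∂ₓ (∂ₓ (∂ₜ (∂ₜ (uncurry w)))) (x, t) = 0 :=
    fun x hx => by
      simpa only [ptt_eq hw₂, pxxxx_eq hw, pxxtt_eq hw] using
        hpde x (uIcc_of_le (zero_le_one (α := ℝ)) ▸ hx) t ht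
  rw [rhoFun_eq_integral_rhoDensity hw₂]
  refine (hasDerivAt_integral_rhoDensity hw hpde').congr_deriv ?_
  obtain ⟨hw0, hwx0⟩ := hbc0 t ht
  have hbc1 := hbc1 t ht
  have hbc2 := hbc2 t ht
  simp only [pt_eq hw₁, px_eq hw₁, pxt_eq hw₂, pxx_eq hw₂, pxtt_eq hw₃, pxxx_eq hw₃]
    at hwx0 hbc1 hbc2 ⊢
  rw [integral_rhoDissipation hw₂, rhoFlux_eq_zero_of_clamped hw0 hwx0]
  simp only [rhoFlux, uncurry_apply_pair]
  linear_combination (∂ₓ (uncurry w) (1, t) - α * w 1 t) * hbc2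
    + ((1 - α) * ∂ₓ (uncurry w) (1, t) + ∂ₓ (∂ₓ (uncurry w)) (1, t) - K₁ * c₁) * hbc1

/-- Derivative of the auxiliary functional ϱ along solutions of the Rayleigh beam
with held boundary inputs c₁, c₂. -/
theorem stmt_6 (a b α K₁ K₂ c₁ c₂ : ℝ) (hα : 1/2 < α ∧ α < 1) (w : ℝ → ℝ → ℝ)
    (hw : ContDiff ℝ 4 (Function.uncurry w))
    (hpde : ∀ x ∈ Set.Icc (0:ℝ) 1, ∀ t ∈ Set.Ioo a b,
      ptt w x t + pxxxx w x t - pxxtt w x t = 0)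
    (hbc0 : ∀ t ∈ Set.Ioo a b, w 0 t = 0 ∧ px w 0 t = 0)
    (hbc1 : ∀ t ∈ Set.Ioo a b, pxx w 1 t = -K₁ * c₁)
    (hbc2 : ∀ t ∈ Set.Ioo a b, pxtt w 1 t - pxxx w 1 t = -K₂ * c₂) :
    ∀ t ∈ Set.Ioo a b,
      HasDerivAt (rhoFun w α)
        ((1/2) * (pt w 1 t) ^ 2 - (1/2 + α) * (∫ x in (0:ℝ)..1, (pt w x t) ^ 2)
          - (α - 1/2) * (∫ x in (0:ℝ)..1, (pxt w x t) ^ 2)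
          + (1/2) * (pxt w 1 t) ^ 2
          - (3/2 - α) * (∫ x in (0:ℝ)..1, (pxx w x t) ^ 2)
          - (1/2) * (pxx w 1 t) ^ 2
          - K₂ * c₂ * px w 1 t + K₂ * α * c₂ * w 1 t
          - K₁ * (1 - α) * c₁ * px w 1 t + K₁ ^ 2 * c₁ ^ 2) t :=
  stmt_6_general a b α K₁ K₂ c₁ c₂ w hw hpde hbc0 hbc1 hbc2
end

section
/- Let K₁, K₂ > 0, α ∈ (1/2, 1), λ > 0, set ε = (2K₂²(1+α²) + 2K₁²(1−α)²)/(3−2α) and C = min{2α−1, (3−2α)/4}. Let u ∈ C²([0,1]) with u(0) = u'(0) = 0, v ∈ C¹([0,1]), and a, b ∈ ℝ. Define E = ½∫₀¹ v² dx + ½∫₀¹ u''² dx + ½∫₀¹ v'² dx. Then −λ(½+α)∫₀¹ v² dx − λ(α−½)∫₀¹ v'² dx − λ(3/2−α)∫₀¹ u''² dx + λ(−K₂ u'(1) a + K₂ α u(1) a − K₁(1−α) u'(1) b) ≤ −λ C E + λ ε a² + (λε/2) b². -/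
/-! Cauchy–Schwarz on `[0, x]` together with `u(0) = u'(0) = 0` bounds `u'(1)²` and `u(1)²` by
`∫₀¹ u''²`. Young's inequality with weight `ε` then absorbs the three boundary products into
`ε a² + (ε/2) b²` plus `(K₂²(1+α²) + K₁²(1-α)²)/(2ε) ∫₀¹ u''²`, and `ε` is chosen so that this
last coefficient is `(3 - 2α)/4`, which leaves enough of the dissipation `-(3/2 - α) ∫₀¹ u''²`
to dominate `-C E`. -/

open intervalIntegral

theorem sq_integral_le_mul_integral_sq {f : ℝ → ℝ} (hf : Continuous f) {a b : ℝ} (hab : a ≤ b) :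
    (∫ t in a..b, f t) ^ 2 ≤ (b - a) * ∫ t in a..b, f t ^ 2 := by
  have hquad : ∀ c : ℝ, 0 ≤ (b - a) * (c * c) + (-2 * ∫ t in a..b, f t) * c
      + ∫ t in a..b, f t ^ 2 := fun c => by
    have hexpand : ∫ t in a..b, (c - f t) ^ 2 = (b - a) * (c * c) + (-2 * ∫ t in a..b, f t) * c
        + ∫ t in a..b, f t ^ 2 := by
      have hf2 : IntervalIntegrable (fun t => f t ^ 2) MeasureTheory.volume a b :=
        (hf.pow 2).intervalIntegrable a b
      have hcf : IntervalIntegrable (fun t => 2 * c * f t) MeasureTheory.volume a b :=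
        (continuous_const.mul hf).intervalIntegrable a b
      simp_rw [show ∀ t, (c - f t) ^ 2 = c * c - 2 * c * f t + f t ^ 2 from fun t => by ring]
      rw [integral_add (intervalIntegrable_const.sub hcf) hf2,
        integral_sub intervalIntegrable_const hcf, integral_const, integral_const_mul, smul_eq_mul]
      ring
    exact hexpand ▸ integral_nonneg hab fun t _ => sq_nonneg _
  have := discrim_le_zero hquad
  rw [discrim] at this
  linarith

theorem sq_le_mul_integral_deriv_sq {f : ℝ → ℝ} (hf : ContDiff ℝ 1 f) (h0 : f 0 = 0) {x L : ℝ}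
    (hx : 0 ≤ x) (hxL : x ≤ L) : f x ^ 2 ≤ L * ∫ t in 0..L, deriv f t ^ 2 := by
  have hf' : Continuous (deriv f) := hf.continuous_deriv le_rfl
  have hftc : f x = ∫ t in 0..x, deriv f t := by
    rw [integral_deriv_eq_sub (fun t _ => hf.differentiable one_ne_zero t)
      (hf'.intervalIntegrable 0 x), h0, sub_zero]
  have hmono : ∫ t in 0..x, deriv f t ^ 2 ≤ ∫ t in 0..L, deriv f t ^ 2 :=
    integral_mono_interval le_rfl hx hxL (Filter.Eventually.of_forall fun t => sq_nonneg _)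
      ((hf'.pow 2).intervalIntegrable 0 L)
  calc f x ^ 2 ≤ x * ∫ t in 0..x, deriv f t ^ 2 := by
        simpa [hftc] using sq_integral_le_mul_integral_sq hf' hx
    _ ≤ L * ∫ t in 0..L, deriv f t ^ 2 :=
        mul_le_mul hxL hmono (integral_nonneg hx fun t _ => sq_nonneg _) (hx.trans hxL)

theorem integral_sq_le_mul_integral_deriv_sq {f : ℝ → ℝ} (hf : ContDiff ℝ 1 f) (h0 : f 0 = 0)
    {L : ℝ} (hL : 0 ≤ L) : ∫ t in 0..L, f t ^ 2 ≤ L * (L * ∫ t in 0..L, deriv f t ^ 2) := by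
  have hbound := integral_mono_on (μ := MeasureTheory.volume) hL
    ((hf.continuous.pow 2).intervalIntegrable 0 L) intervalIntegrable_const
    fun x hx => sq_le_mul_integral_deriv_sq hf h0 hx.1 hx.2
  rwa [integral_const, smul_eq_mul, sub_zero] at hbound

theorem mul_le_sq_div_add_mul_sq {ε : ℝ} (hε : 0 < ε) (x y : ℝ) :
    x * y ≤ x ^ 2 / (2 * ε) + ε / 2 * y ^ 2 := by
  have h : 0 ≤ (x - ε * y) ^ 2 / (2 * ε) := by positivity
  have : (x - ε * y) ^ 2 / (2 * ε) = x ^ 2 / (2 * ε) + ε / 2 * y ^ 2 - x * y := by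
    field_simp; ring
  linarith

theorem boundary_terms_le {ε : ℝ} (hε : 0 < ε) (K₁ K₂ α a b D U I : ℝ) (hD : D ^ 2 ≤ I)
    (hU : U ^ 2 ≤ I) :
    -K₂ * D * a + K₂ * α * U * a - K₁ * (1 - α) * D * b
      ≤ (K₂ ^ 2 * (1 + α ^ 2) + K₁ ^ 2 * (1 - α) ^ 2) / (2 * ε) * I
        + ε * a ^ 2 + ε / 2 * b ^ 2 := by
  have hDa := mul_le_sq_div_add_mul_sq hε (-K₂ * D) a
  have hUa := mul_le_sq_div_add_mul_sq hε (K₂ * α * U) a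
  have hDb := mul_le_sq_div_add_mul_sq hε (-K₁ * (1 - α) * D) b
  calc -K₂ * D * a + K₂ * α * U * a - K₁ * (1 - α) * D * b
      ≤ (-K₂ * D) ^ 2 / (2 * ε) + ε / 2 * a ^ 2 + ((K₂ * α * U) ^ 2 / (2 * ε) + ε / 2 * a ^ 2)
        + ((-K₁ * (1 - α) * D) ^ 2 / (2 * ε) + ε / 2 * b ^ 2) := by linarith
    _ = (K₂ ^ 2 + K₁ ^ 2 * (1 - α) ^ 2) / (2 * ε) * D ^ 2 + K₂ ^ 2 * α ^ 2 / (2 * ε) * U ^ 2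
        + ε * a ^ 2 + ε / 2 * b ^ 2 := by ring
    _ ≤ (K₂ ^ 2 + K₁ ^ 2 * (1 - α) ^ 2) / (2 * ε) * I + K₂ ^ 2 * α ^ 2 / (2 * ε) * I
        + ε * a ^ 2 + ε / 2 * b ^ 2 := by gcongr
    _ = _ := by ring

theorem sq_apply_one_le_integral_deriv_deriv_sq {u : ℝ → ℝ} (hu : ContDiff ℝ 2 u) (hu0 : u 0 = 0)
    (hu0' : deriv u 0 = 0) : u 1 ^ 2 ≤ ∫ x in (0:ℝ)..1, deriv (deriv u) x ^ 2 := by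
  linarith [sq_le_mul_integral_deriv_sq (hu.of_le one_le_two) hu0 zero_le_one le_rfl,
    integral_sq_le_mul_integral_deriv_sq hu.deriv' hu0' zero_le_one]

theorem stmt_12_general (K₁ K₂ α lam ε C : ℝ) (hK₂ : 0 < K₂)
    (hα : 1/2 < α ∧ α < 1) (hlam : 0 < lam)
    (hε : ε = (2 * K₂ ^ 2 * (1 + α ^ 2) + 2 * K₁ ^ 2 * (1 - α) ^ 2) / (3 - 2 * α))
    (hC : C = min (2 * α - 1) ((3 - 2 * α) / 4))
    (u v : ℝ → ℝ) (hu : ContDiff ℝ 2 u) (hu0 : u 0 = 0) (hu0' : deriv u 0 = 0)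
    (a b E : ℝ)
    (hE : E = (1/2) * (∫ x in (0:ℝ)..1, (v x) ^ 2)
        + (1/2) * (∫ x in (0:ℝ)..1, (deriv (deriv u) x) ^ 2)
        + (1/2) * (∫ x in (0:ℝ)..1, (deriv v x) ^ 2)) :
    -lam * (1/2 + α) * (∫ x in (0:ℝ)..1, (v x) ^ 2)
      - lam * (α - 1/2) * (∫ x in (0:ℝ)..1, (deriv v x) ^ 2)
      - lam * (3/2 - α) * (∫ x in (0:ℝ)..1, (deriv (deriv u) x) ^ 2)
      + lam * (-K₂ * deriv u 1 * a + K₂ * α * u 1 * a - K₁ * (1 - α) * deriv u 1 * b)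
    ≤ -lam * C * E + lam * ε * a ^ 2 + (lam * ε / 2) * b ^ 2 := by
  obtain ⟨hα₁, hα₂⟩ := hα
  have hα₃ : 0 < 3 - 2 * α := by linarith
  have hε_pos : 0 < ε := hε ▸ div_pos (by positivity) hα₃
  set I := ∫ x in (0:ℝ)..1, deriv (deriv u) x ^ 2
  have hD : deriv u 1 ^ 2 ≤ I := by
    simpa only [one_mul] using sq_le_mul_integral_deriv_sq hu.deriv' hu0' zero_le_one le_rfl
  have hU : u 1 ^ 2 ≤ I := sq_apply_one_le_integral_deriv_deriv_sq hu hu0 hu0'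
  have hε_weight : (K₂ ^ 2 * (1 + α ^ 2) + K₁ ^ 2 * (1 - α) ^ 2) / (2 * ε) = (3 - 2 * α) / 4 := by
    rw [hε]; field_simp; ring
  have hboundary := boundary_terms_le hε_pos K₁ K₂ α a b _ _ I hD hU
  rw [hε_weight] at hboundary
  have hC₁ : C ≤ 2 * α - 1 := hC ▸ min_le_left _ _
  have hC₂ : C ≤ (3 - 2 * α) / 4 := hC ▸ min_le_right _ _
  have hI : ∀ g : ℝ → ℝ, 0 ≤ ∫ x in (0:ℝ)..1, g x ^ 2 :=
    fun g => integral_nonneg zero_le_one fun _ _ => sq_nonneg _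
  have hI₂ : 0 ≤ I := hI _
  have hbalance : -(1/2 + α) * (∫ x in (0:ℝ)..1, v x ^ 2)
      - (α - 1/2) * (∫ x in (0:ℝ)..1, deriv v x ^ 2) - (3/2 - α) * I
      + (-K₂ * deriv u 1 * a + K₂ * α * u 1 * a - K₁ * (1 - α) * deriv u 1 * b)
      ≤ -C * E + ε * a ^ 2 + ε / 2 * b ^ 2 := by
    rw [hE]
    linarith [mul_le_mul_of_nonneg_right hC₁ (hI v),
      mul_le_mul_of_nonneg_right hC₁ (hI (deriv v)), mul_le_mul_of_nonneg_right hC₂ hI₂,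
      mul_nonneg hα₃.le hI₂, hI v, hI (deriv v)]
  linarith [mul_le_mul_of_nonneg_left hbalance hlam.le]

/-- Combined multiplier estimate: with ε = (2K₂²(1+α²)+2K₁²(1−α)²)/(3−2α) and
C = min{2α−1, (3−2α)/4}, the sum 𝒜 = 𝒜₁+...+𝒜₅ of the interior and boundary
multiplier terms satisfies 𝒜 ≤ −λCE + λεa² + (λε/2)b². -/
theorem stmt_12 (K₁ K₂ α lam ε C : ℝ) (hK₁ : 0 < K₁) (hK₂ : 0 < K₂)
    (hα : 1/2 < α ∧ α < 1) (hlam : 0 < lam)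
    (hε : ε = (2 * K₂ ^ 2 * (1 + α ^ 2) + 2 * K₁ ^ 2 * (1 - α) ^ 2) / (3 - 2 * α))
    (hC : C = min (2 * α - 1) ((3 - 2 * α) / 4))
    (u v : ℝ → ℝ) (hu : ContDiff ℝ 2 u) (hu0 : u 0 = 0) (hu0' : deriv u 0 = 0)
    (hv : ContDiff ℝ 1 v) (a b E : ℝ)
    (hE : E = (1/2) * (∫ x in (0:ℝ)..1, (v x) ^ 2)
        + (1/2) * (∫ x in (0:ℝ)..1, (deriv (deriv u) x) ^ 2)
        + (1/2) * (∫ x in (0:ℝ)..1, (deriv v x) ^ 2)) :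
    -lam * (1/2 + α) * (∫ x in (0:ℝ)..1, (v x) ^ 2)
      - lam * (α - 1/2) * (∫ x in (0:ℝ)..1, (deriv v x) ^ 2)
      - lam * (3/2 - α) * (∫ x in (0:ℝ)..1, (deriv (deriv u) x) ^ 2)
      + lam * (-K₂ * deriv u 1 * a + K₂ * α * u 1 * a - K₁ * (1 - α) * deriv u 1 * b)
    ≤ -lam * C * E + lam * ε * a ^ 2 + (lam * ε / 2) * b ^ 2 :=
  stmt_12_general K₁ K₂ α lam ε C hK₂ hα hlam hε hC u v hu hu0 hu0' a b E hE
end
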